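/- arXiv:2109.08934 — 4 statements merged into one kernel-verified Lean document; each statement's English description precedes it below -/
import Mathlib

section
/- Let τ = 1 and g(x) = ln(1 + x(e - 1)). Suppose nonnegative reals x₁ ≥ x₂ ≥ x₃ ≥ ⋯ ≥ x_n satisfy ∑_j x_j = 1, x_j ≤ 1 - e^{-1} for all j, and x_j + x_k ≤ 1 - e^{-2} for all j ≠ k. If x₁ < 1 - e^{-1} and x₂ > 0, then there exists ε > 0 such that replacing x₁ by x₁ + ε and x₂ by x₂ - ε strictly decreases ∑_j g(x_j) while preserving all of the constraints. -/
/-!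
Moving mass `ε` from `x₂` to `x₁` keeps the total, and since `x₂ ≤ x₁` and
`g = log (1 + · (e - 1))` is strictly concave, `g (x₁ + ε) + g (x₂ - ε) < g x₁ + g x₂`.
The constraints survive once `ε` is at most the slacks `x₂`, `1 - e⁻¹ - x₁` and
`e⁻¹ / 2 - e⁻² > 0`; the last one covers the pairs `(1, m)` with `m ≥ 3`, since ordering and
`∑ x = 1` force `x₁ + x_m ≤ 1 - e⁻¹ / 2`.
-/

open Real Set

theorem StrictConcaveOn.map_add_add_map_sub_lt {s : Set ℝ} {f : ℝ → ℝ}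
    (hf : StrictConcaveOn ℝ s f) {a b ε : ℝ} (ha : a + ε ∈ s) (hb : b - ε ∈ s)
    (hba : b ≤ a) (hε : 0 < ε) : f (a + ε) + f (b - ε) < f a + f b := by
  -- `a` and `b` are the combinations of `b - ε`, `a + ε` with swapped weights `θ`, `1 - θ`.
  have hd : 0 < a - b + 2 * ε := by linarith
  set θ := ε / (a - b + 2 * ε)
  have hθd : θ * (a - b + 2 * ε) = ε := div_mul_cancel₀ _ hd.ne'
  have hθ0 : 0 < θ := div_pos hε hd
  have hθ1 : 0 < 1 - θ := by rw [sub_pos, div_lt_one hd]; linarith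
  have hne : b - ε ≠ a + ε := by linarith
  have hfa := hf.2 hb ha hne hθ0 hθ1 (by ring)
  have hfb := hf.2 hb ha hne hθ1 hθ0 (by ring)
  have hcomb_a : θ * (b - ε) + (1 - θ) * (a + ε) = a := by linear_combination -hθd
  have hcomb_b : (1 - θ) * (b - ε) + θ * (a + ε) = b := by linear_combination hθd
  simp only [smul_eq_mul, hcomb_a, hcomb_b] at hfa hfb
  linarith

theorem strictConcaveOn_log_one_add_mul {c : ℝ} (hc : 0 < c) :
    StrictConcaveOn ℝ (Ici 0) (fun t => log (1 + t * c)) := by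
  refine ⟨convex_Ici 0, fun x hx y hy hxy a b ha hb hab => ?_⟩
  have hpos : ∀ t ∈ Ici (0 : ℝ), 1 + t * c ∈ Ioi 0 := fun t ht => by
    have : 0 ≤ t * c := mul_nonneg ht hc.le
    simp only [mem_Ioi]; linarith
  have hne : 1 + x * c ≠ 1 + y * c := by
    simpa [mul_left_inj' hc.ne'] using hxy
  have h := strictConcaveOn_log_Ioi.2 (hpos x hx) (hpos y hy) hne ha hb hab
  convert h using 2
  simp only [smul_eq_mul]
  linear_combination -hab

theorem exp_neg_two_lt_half_exp_neg_one : exp (-2) < exp (-1) / 2 := by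
  have h2 : 2 < exp 1 := by linarith [add_one_lt_exp one_ne_zero]
  have hsplit : exp (-1) = exp (-2) * exp 1 := by rw [← exp_add]; norm_num
  rw [hsplit]
  nlinarith [exp_pos (-2)]

theorem add_add_le_sum_of_nonneg {ι : Type*} [Fintype ι] [DecidableEq ι] {x : ι → ℝ}
    (hx : ∀ j, 0 ≤ x j) {i j k : ι} (hij : i ≠ j) (hik : i ≠ k) (hjk : j ≠ k) :
    x i + x j + x k ≤ ∑ m, x m := by
  have h3 : ∑ m ∈ {i, j, k}, x m = x i + x j + x k := by
    rw [Finset.sum_insert (by simp [hij, hik]), Finset.sum_pair hjk, add_assoc]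
  exact h3 ▸ Finset.sum_le_univ_sum_of_nonneg hx

section ShiftMass

variable {ι : Type*} [DecidableEq ι] (x : ι → ℝ) (i k : ι) (ε : ℝ)

def shiftMass : ι → ℝ := fun j => if j = i then x j + ε else if j = k then x j - ε else x j

@[simp]
theorem shiftMass_apply_left : shiftMass x i k ε i = x i + ε := if_pos rfl

variable {x i k ε}

@[simp]
theorem shiftMass_apply_right (hik : i ≠ k) : shiftMass x i k ε k = x k - ε := by
  simp [shiftMass, hik.symm]

theorem shiftMass_apply_of_ne {j : ι} (hi : j ≠ i) (hk : j ≠ k) :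
    shiftMass x i k ε j = x j := by
  simp [shiftMass, hi, hk]

theorem shiftMass_le_self_of_ne (hε : 0 ≤ ε) {j : ι} (hj : j ≠ i) :
    shiftMass x i k ε j ≤ x j := by
  simp only [shiftMass, if_neg hj]
  split_ifs <;> linarith

theorem shiftMass_nonneg (hx : ∀ j, 0 ≤ x j) (hε : 0 ≤ ε) (hεk : ε ≤ x k) (j : ι) :
    0 ≤ shiftMass x i k ε j := by
  unfold shiftMass
  split_ifs with hi hk
  · linarith [hx j]
  · subst hk; linarith
  · exact hx j

theorem shiftMass_le {B : ℝ} (hx : ∀ j, x j ≤ B) (hε : 0 ≤ ε) (hi : x i + ε ≤ B)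
    (j : ι) :
    shiftMass x i k ε j ≤ B := by
  by_cases hj : j = i
  · subst hj; simpa using hi
  · exact (shiftMass_le_self_of_ne hε hj).trans (hx j)

theorem shiftMass_add_le {B : ℝ} (hik : i ≠ k) (hε : 0 ≤ ε)
    (hx : ∀ j m, j ≠ m → x j + x m ≤ B)
    (hi : ∀ m, m ≠ i → m ≠ k → x i + ε + x m ≤ B)
    (j m : ι) (hjm : j ≠ m) : shiftMass x i k ε j + shiftMass x i k ε m ≤ B := by
  have with_left : ∀ m, m ≠ i → shiftMass x i k ε i + shiftMass x i k ε m ≤ B := by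
    intro m hm
    by_cases hmk : m = k
    · subst hmk; simpa [hik] using hx i m hm.symm
    · simpa [shiftMass_apply_of_ne hm hmk] using hi m hm hmk
  by_cases hj : j = i
  · subst hj; exact with_left m hjm.symm
  by_cases hm : m = i
  · subst hm; rw [add_comm]; exact with_left j hj
  linarith [shiftMass_le_self_of_ne (x := x) (k := k) hε hj,
    shiftMass_le_self_of_ne (x := x) (k := k) hε hm, hx j m hjm]

theorem sum_comp_shiftMass_sub [Fintype ι] (f : ℝ → ℝ) (hik : i ≠ k) :
    ∑ j, f (shiftMass x i k ε j) - ∑ j, f (x j) =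
      (f (x i + ε) - f (x i)) + (f (x k - ε) - f (x k)) := by
  rw [← Finset.sum_sub_distrib,
    Finset.sum_eq_add_of_mem i k (Finset.mem_univ i) (Finset.mem_univ k) hik]
  · simp [hik]
  · rintro j - ⟨hji, hjk⟩
    simp [shiftMass_apply_of_ne hji hjk]

theorem sum_shiftMass [Fintype ι] (hik : i ≠ k) : ∑ j, shiftMass x i k ε j = ∑ j, x j := by
  linarith [sum_comp_shiftMass_sub (x := x) (ε := ε) (fun t => t) hik]

theorem StrictConcaveOn.sum_comp_shiftMass_lt [Fintype ι] {s : Set ℝ} {f : ℝ → ℝ}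
    (hf : StrictConcaveOn ℝ s f) (hik : i ≠ k) (hki : x k ≤ x i) (hε : 0 < ε)
    (hi : x i + ε ∈ s) (hk : x k - ε ∈ s) :
    ∑ j, f (shiftMass x i k ε j) < ∑ j, f (x j) := by
  linarith [sum_comp_shiftMass_sub (x := x) (ε := ε) f hik,
    hf.map_add_add_map_sub_lt hi hk hki hε]

end ShiftMass

theorem stmt_3 (n : ℕ) (hn : 2 ≤ n) (x : Fin n → ℝ)
    (hanti : ∀ j k : Fin n, j ≤ k → x k ≤ x j)
    (hnonneg : ∀ j, 0 ≤ x j)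
    (hsum : ∑ j, x j = 1)
    (hsingle : ∀ j, x j ≤ 1 - Real.exp (-1))
    (hpair : ∀ j k, j ≠ k → x j + x k ≤ 1 - Real.exp (-2))
    (h1 : x ⟨0, by omega⟩ < 1 - Real.exp (-1))
    (h2 : 0 < x ⟨1, by omega⟩) :
    ∃ ε > 0, ∀ x' : Fin n → ℝ,
      (x' = fun j => if j = (⟨0, by omega⟩ : Fin n) then x j + ε
                     else if j = (⟨1, by omega⟩ : Fin n) then x j - ε else x j) →
      (∀ j, 0 ≤ x' j) ∧ (∑ j, x' j = 1) ∧
      (∀ j, x' j ≤ 1 - Real.exp (-1)) ∧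
      (∀ j k, j ≠ k → x' j + x' k ≤ 1 - Real.exp (-2)) ∧
      (∑ j, Real.log (1 + x' j * (Real.exp 1 - 1)) <
        ∑ j, Real.log (1 + x j * (Real.exp 1 - 1))) := by
  set i0 : Fin n := ⟨0, by omega⟩
  set i1 : Fin n := ⟨1, by omega⟩
  have hne : i0 ≠ i1 := by simp [i0, i1, Fin.ext_iff]
  have hgap := exp_neg_two_lt_half_exp_neg_one
  set ε := min (x i1) (min (1 - exp (-1) - x i0) (exp (-1) / 2 - exp (-2)))
  have hε : 0 < ε := lt_min h2 (lt_min (by linarith) (by linarith))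
  have hε1 : ε ≤ x i1 := min_le_left _ _
  have hε2 : ε ≤ 1 - exp (-1) - x i0 := (min_le_right _ _).trans (min_le_left _ _)
  have hε3 : ε ≤ exp (-1) / 2 - exp (-2) := (min_le_right _ _).trans (min_le_right _ _)
  have hfirst_add : ∀ m, m ≠ i0 → m ≠ i1 → x i0 + ε + x m ≤ 1 - exp (-2) := by
    intro m hm0 hm1
    have hm0' : (m : ℕ) ≠ 0 := fun h => hm0 (Fin.ext h)
    have hm1' : (m : ℕ) ≠ 1 := fun h => hm1 (Fin.ext h)
    have hm : x m ≤ x i1 := hanti i1 m <| by rw [Fin.le_def]; change 1 ≤ (m : ℕ); omega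
    linarith [add_add_le_sum_of_nonneg hnonneg hne hm0.symm hm1.symm, hsingle i0]
  have he1 : 0 < exp 1 - 1 := by linarith [add_one_lt_exp one_ne_zero]
  refine ⟨ε, hε, fun x' hx' => ?_⟩
  replace hx' : x' = shiftMass x i0 i1 ε := hx'
  subst hx'
  exact ⟨shiftMass_nonneg hnonneg hε.le hε1, (sum_shiftMass hne).trans hsum,
    shiftMass_le hsingle hε.le (by linarith), shiftMass_add_le hne hε.le hpair hfirst_add,
    (strictConcaveOn_log_one_add_mul he1).sum_comp_shiftMass_lt hne
      (hanti i0 i1 (by simp [i0, i1, Fin.le_def])) hε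
      (by simp only [Set.mem_Ici]; linarith [hnonneg i0])
      (by simp only [Set.mem_Ici]; linarith)⟩
end

section
/- Let F(x, κ) = ∑_{y ∈ S(x)} ∫₀^κ e^{-ζ} · y/(y + (1-y)e^{-ζ}) dζ + e^{-κ}·(1 - ∏_{y ∈ S(x)} exp(-∫_κ^1 y/(y + (1-y)e^{-ζ}) dζ)), where S(x) = {x} if 0 ≤ x ≤ 1-e^{-1}, S(x) = {1-e^{-1}, x-(1-e^{-1})} if 1-e^{-1} < x ≤ 1-e^{-2}, and S(x) = {1-e^{-1}, e^{-1}-e^{-2}, x-(1-e^{-2})} if 1-e^{-2} < x ≤ 1. Then F(1 - e^{-1}, 1)/(1 - e^{-1}) ≥ 0.719. -/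
/-!
At `κ = 1` the second term of `F` vanishes, and with `a = 1 - e⁻¹` the first one integrates in
closed form: `∫₀¹ e^{-ζ} a / (a + (1 - a) e^{-ζ}) dζ = -(a / e⁻¹) log (1 - e⁻¹ + e⁻²)`.
So `F(a, 1) / a = -e log (1 - e⁻¹ + e⁻²) ≈ 0.71955`, and the bound reduces to the numerical
inequality `(1 - e⁻¹ + e⁻²) e^{0.719 e⁻¹} ≤ 1`.
-/

open Real

theorem integral_exp_neg_mul_div_add_mul_exp_neg {a b : ℝ} (ha : 0 ≤ a) (hb : 0 < b) (s t : ℝ) :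
    ∫ ζ in s..t, exp (-ζ) * (a / (a + b * exp (-ζ))) =
      a / b * (log (a + b * exp (-s)) - log (a + b * exp (-t))) := by
  have hpos : ∀ ζ : ℝ, 0 < a + b * exp (-ζ) := fun ζ => by positivity
  have hderiv : ∀ ζ : ℝ, HasDerivAt (fun ζ => -(a / b) * log (a + b * exp (-ζ)))
      (exp (-ζ) * (a / (a + b * exp (-ζ)))) ζ := by
    intro ζ
    have hinner : HasDerivAt (fun ζ => a + b * exp (-ζ)) (b * -exp (-ζ)) ζ := by
      simpa using ((hasDerivAt_neg ζ).exp.const_mul b).const_add a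
    refine ((hinner.log (hpos ζ).ne').const_mul (-(a / b))).congr_deriv ?_
    field_simp
  rw [intervalIntegral.integral_eq_sub_of_hasDerivAt (fun ζ _ => hderiv ζ)]
  · ring
  · refine Continuous.intervalIntegrable ?_ s t
    exact (continuous_exp.comp continuous_neg).mul (continuous_const.div (by fun_prop)
      fun ζ => (hpos ζ).ne')

theorem one_sub_exp_neg_one_add_sq_le : 1 - exp (-1) + exp (-1) ^ 2 ≤ 0.7674559 := by
  nlinarith [exp_neg_one_gt_d9, exp_neg_one_lt_d9]

theorem log_one_sub_exp_neg_one_add_sq_le :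
    log (1 - exp (-1) + exp (-1) ^ 2) ≤ -(0.719 * exp (-1)) := by
  have hz : 0 < 1 - exp (-1) + exp (-1) ^ 2 := by nlinarith [exp_neg_one_lt_d9]
  have hexp : exp 0.2645054 ≤ 1.3028262 := by
    have h := exp_bound' (x := (0.2645054 : ℝ)) (by norm_num) (by norm_num) (n := 4) (by norm_num)
    norm_num [Finset.sum_range_succ, Nat.factorial] at h
    linarith
  rw [log_le_iff_le_exp hz]
  calc 1 - exp (-1) + exp (-1) ^ 2 ≤ 0.7674559 := one_sub_exp_neg_one_add_sq_le
    _ ≤ (exp 0.2645054)⁻¹ := by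
      rw [le_inv_comm₀ (by norm_num) (exp_pos _)]
      linarith
    _ ≤ exp (-(0.719 * exp (-1))) := by
      rw [← exp_neg, exp_le_exp]
      linarith [exp_neg_one_lt_d9]

theorem stmt_9 :
    ((∫ ζ in (0:ℝ)..1, Real.exp (-ζ) *
        ((1 - Real.exp (-1)) /
          ((1 - Real.exp (-1)) + (1 - (1 - Real.exp (-1))) * Real.exp (-ζ)))) +
      Real.exp (-1) * (1 - Real.exp (-(∫ ζ in (1:ℝ)..1,
        (1 - Real.exp (-1)) /
          ((1 - Real.exp (-1)) + (1 - (1 - Real.exp (-1))) * Real.exp (-ζ)))))) /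
      (1 - Real.exp (-1)) ≥ 0.719 := by
  have hu : 0 < exp (-1) := exp_pos _
  have ha : 0 < 1 - exp (-1) := by linarith [exp_neg_one_lt_d9]
  rw [intervalIntegral.integral_same, integral_exp_neg_mul_div_add_mul_exp_neg ha.le (by linarith)]
  have hden_one : 1 - exp (-1) + (1 - (1 - exp (-1))) * exp (-1) = 1 - exp (-1) + exp (-1) ^ 2 := by
    ring
  have hden_zero : 1 - exp (-1) + (1 - (1 - exp (-1))) * exp (-0) = 1 := by simp
  rw [hden_one, hden_zero, log_one, neg_zero, exp_zero, sub_self, mul_zero, add_zero, ge_iff_le,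
    le_div_iff₀ ha, sub_sub_cancel]
  calc 0.719 * (1 - exp (-1)) = (1 - exp (-1)) / exp (-1) * (0.719 * exp (-1)) := by field_simp
    _ ≤ (1 - exp (-1)) / exp (-1) * (0 - log (1 - exp (-1) + exp (-1) ^ 2)) := by
      gcongr
      linarith [log_one_sub_exp_neg_one_add_sq_le]
end

section
/- lim_{T→∞} ∑_{t=1}^{T} (1/T) · x/(x + (1-x)·(1 - τ/T)^{t-1}) = ∫₀¹ x/(x + (1-x)·e^{-τζ}) dζ = (1/τ)·ln(1 + x·(e^τ - 1)), for fixed x ∈ (0,1] and τ ∈ (0,1]. -/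
/-!
For monotone `f`, the left Riemann sum `(1/T) ∑_{t<T} f (t/T)` lies between
`∫₀¹ f - (f 1 - f 0)/T` and `∫₀¹ f`, so it converges to `∫₀¹ f`. The given sum is the left
Riemann sum of the increasing function `ζ ↦ x / (x + (1 - x) e^{-τζ})` with each
`e^{-τt/T} = (e^{-τ/T})^t` replaced by `(1 - τ/T)^t`. As `|e^{-a} - (1 - a)| ≤ a²`, this
changes the power by at most `t (τ/T)²`, and `v ↦ x / (x + (1 - x) v)` is `1/x`-Lipschitz on
`v ≥ 0`, so the two sums differ by at most `τ² / (x T)`. The integral is evaluated with the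
antiderivative `τ⁻¹ log (x e^{τζ} + 1 - x)`.
-/

open Filter Topology Finset Real Set

theorem MonotoneOn.integral_sub_riemannSum_mem_Icc {f : ℝ → ℝ} (hf : MonotoneOn f (Icc 0 1))
    {T : ℕ} (hT : 0 < T) :
    (∫ ζ in (0:ℝ)..1, f ζ) - ∑ t ∈ range T, 1 / (T : ℝ) * f (t / T) ∈
      Icc 0 ((f 1 - f 0) / T) := by
  have hT' : (0 : ℝ) < T := by exact_mod_cast hT
  have hmaps : ∀ u ∈ Icc (0 : ℝ) (0 + T), u / T ∈ Icc (0 : ℝ) 1 := fun u ⟨hu0, huT⟩ =>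
    ⟨div_nonneg hu0 hT'.le, (div_le_one hT').2 (by simpa using huT)⟩
  have hg : MonotoneOn (fun u => f (u / T)) (Icc 0 (0 + T)) := fun u hu v hv huv =>
    hf (hmaps u hu) (hmaps v hv) (by gcongr)
  have hrescale : ∫ u in (0:ℝ)..0 + T, f (u / T) = T * ∫ ζ in (0:ℝ)..1, f ζ := by
    rw [zero_add, intervalIntegral.integral_comp_div _ hT'.ne', zero_div, div_self hT'.ne',
      smul_eq_mul]
  have hlower := hg.sum_le_integral
  have hupper := hg.integral_le_sum
  have hshift := sum_range_succ' (fun i : ℕ => f (i / T)) T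
  rw [sum_range_succ] at hshift
  simp only [zero_add, Nat.cast_add, Nat.cast_one, Nat.cast_zero, zero_div, div_self hT'.ne']
    at hlower hupper hshift hrescale
  rw [← mul_sum, Set.mem_Icc, sub_nonneg, sub_le_iff_le_add]
  constructor
  · rw [one_div_mul_eq_div, div_le_iff₀' hT']
    linarith
  · rw [one_div_mul_eq_div, ← add_div, le_div_iff₀' hT']
    linarith

theorem MonotoneOn.tendsto_riemannSum {f : ℝ → ℝ} (hf : MonotoneOn f (Icc 0 1)) :
    Tendsto (fun T : ℕ => ∑ t ∈ range T, 1 / (T : ℝ) * f (t / T)) atTop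
      (𝓝 (∫ ζ in (0:ℝ)..1, f ζ)) := by
  rw [tendsto_iff_norm_sub_tendsto_zero]
  refine squeeze_zero_norm' ?_ (tendsto_const_div_atTop_nhds_zero_nat (f 1 - f 0))
  filter_upwards [eventually_gt_atTop 0] with T hT
  obtain ⟨hnonneg, hle⟩ := hf.integral_sub_riemannSum_mem_Icc hT
  rw [norm_norm, norm_sub_rev, Real.norm_of_nonneg hnonneg]
  exact hle

theorem abs_div_add_mul_sub_div_add_mul_le {x u v : ℝ} (hx₀ : 0 < x) (hx₁ : x ≤ 1)
    (hu : 0 ≤ u) (hv : 0 ≤ v) :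
    |x / (x + (1 - x) * u) - x / (x + (1 - x) * v)| ≤ |u - v| / x := by
  have hy : 0 ≤ 1 - x := sub_nonneg.2 hx₁
  have hDu : x ≤ x + (1 - x) * u := le_add_of_nonneg_right (mul_nonneg hy hu)
  have hDv : x ≤ x + (1 - x) * v := le_add_of_nonneg_right (mul_nonneg hy hv)
  have hD : x * x ≤ (x + (1 - x) * u) * (x + (1 - x) * v) :=
    mul_le_mul hDu hDv hx₀.le (hx₀.trans_le hDu).le
  have hdiff : x / (x + (1 - x) * u) - x / (x + (1 - x) * v)
      = x * (1 - x) * (v - u) / ((x + (1 - x) * u) * (x + (1 - x) * v)) := by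
    field_simp [(hx₀.trans_le hDu).ne', (hx₀.trans_le hDv).ne']
    ring
  rw [hdiff, abs_div, abs_mul, abs_mul, abs_of_pos hx₀, abs_of_nonneg hy, abs_sub_comm,
    abs_of_pos (by positivity : 0 < (x + (1 - x) * u) * (x + (1 - x) * v))]
  calc x * (1 - x) * |u - v| / ((x + (1 - x) * u) * (x + (1 - x) * v))
      ≤ x * 1 * |u - v| / (x * x) := by gcongr; linarith
    _ = |u - v| / x := by field_simp

theorem abs_exp_neg_pow_sub_one_sub_pow_le {a : ℝ} (ha₀ : 0 ≤ a) (ha₁ : a ≤ 1) (t : ℕ) :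
    |exp (-a) ^ t - (1 - a) ^ t| ≤ t * a ^ 2 := by
  have hexp : |exp (-a) - (1 - a)| ≤ a ^ 2 := by
    have h := abs_exp_sub_one_sub_id_le (x := -a) (by rwa [abs_neg, abs_of_nonneg ha₀])
    rw [neg_sq] at h
    convert h using 2
    ring
  have hmax : max |exp (-a)| |1 - a| ^ (t - 1) ≤ 1 := by
    refine pow_le_one₀ (le_max_of_le_left (abs_nonneg _)) (max_le ?_ ?_)
    · rw [abs_of_pos (exp_pos _)]; exact exp_le_one_iff.2 (neg_nonpos.2 ha₀)
    · rw [abs_of_nonneg (sub_nonneg.2 ha₁)]; linarith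
  calc |exp (-a) ^ t - (1 - a) ^ t|
      ≤ |exp (-a) - (1 - a)| * t * max |exp (-a)| |1 - a| ^ (t - 1) := abs_pow_sub_pow_le ..
    _ ≤ a ^ 2 * t * 1 := by gcongr
    _ = t * a ^ 2 := by ring

theorem integral_div_add_mul_exp_neg_mul {x τ : ℝ} (hx₀ : 0 < x) (hx₁ : x ≤ 1) (hτ : τ ≠ 0) :
    ∫ ζ in (0:ℝ)..1, x / (x + (1 - x) * exp (-τ * ζ)) =
      1 / τ * log (1 + x * (exp τ - 1)) := by
  have hpos : ∀ ζ : ℝ, 0 < x * exp (τ * ζ) + (1 - x) := fun ζ => by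
    have := exp_pos (τ * ζ); nlinarith
  have hderiv : ∀ ζ ∈ uIcc (0:ℝ) 1,
      HasDerivAt (fun ζ => 1 / τ * log (x * exp (τ * ζ) + (1 - x)))
        (x / (x + (1 - x) * exp (-τ * ζ))) ζ := fun ζ _ => by
    have h := (((((hasDerivAt_id ζ).const_mul τ).exp.const_mul x).add_const (1 - x)).log
      (hpos ζ).ne').const_mul (1 / τ)
    refine h.congr_deriv ?_
    simp only [id, neg_mul, exp_neg]
    field_simp [(hpos ζ).ne', (exp_pos (τ * ζ)).ne']
  have hcont : Continuous fun ζ => x / (x + (1 - x) * exp (-τ * ζ)) :=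
    continuous_const.div (by fun_prop) fun ζ => by
      have := exp_pos (-τ * ζ); nlinarith
  rw [intervalIntegral.integral_eq_sub_of_hasDerivAt hderiv (hcont.intervalIntegrable 0 1)]
  simp only [mul_zero, mul_one, exp_zero, add_sub_cancel, log_one, sub_zero]
  ring_nf

theorem monotone_div_add_mul_exp_neg_mul {x τ : ℝ} (hx₀ : 0 < x) (hx₁ : x ≤ 1)
    (hτ : 0 ≤ τ) :
    Monotone fun ζ => x / (x + (1 - x) * exp (-τ * ζ)) := by
  intro a b hab
  dsimp only
  have hy : 0 ≤ 1 - x := sub_nonneg.2 hx₁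
  have hD := add_pos_of_pos_of_nonneg hx₀ (mul_nonneg hy (exp_pos (-τ * b)).le)
  gcongr x / (x + (1 - x) * exp ?_)
  nlinarith

theorem abs_div_add_mul_one_sub_pow_sub_le {x a : ℝ} (hx₀ : 0 < x) (hx₁ : x ≤ 1)
    (ha₀ : 0 ≤ a) (ha₁ : a ≤ 1) (t : ℕ) :
    |x / (x + (1 - x) * (1 - a) ^ t) - x / (x + (1 - x) * exp (-(a * t)))| ≤ t * a ^ 2 / x := by
  rw [mul_comm a, ← mul_neg, exp_nat_mul]
  calc _ ≤ |(1 - a) ^ t - exp (-a) ^ t| / x :=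
        abs_div_add_mul_sub_div_add_mul_le hx₀ hx₁ (pow_nonneg (by linarith) t)
          (pow_nonneg (exp_pos _).le t)
    _ ≤ t * a ^ 2 / x := by
        rw [abs_sub_comm]; gcongr; exact abs_exp_neg_pow_sub_one_sub_pow_le ha₀ ha₁ t

theorem tendsto_sum_one_sub_pow_sub_riemannSum {x τ : ℝ} (hx₀ : 0 < x) (hx₁ : x ≤ 1)
    (hτ₀ : 0 ≤ τ) (hτ₁ : τ ≤ 1) :
    Tendsto (fun T : ℕ =>
        ∑ t ∈ range T, 1 / (T : ℝ) * (x / (x + (1 - x) * (1 - τ / T) ^ t)) -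
          ∑ t ∈ range T, 1 / (T : ℝ) * (x / (x + (1 - x) * exp (-τ * (t / T)))))
      atTop (𝓝 0) := by
  refine squeeze_zero_norm' ?_ (tendsto_const_div_atTop_nhds_zero_nat (τ ^ 2 / x))
  filter_upwards [eventually_gt_atTop 0] with T hT
  have hT' : (0 : ℝ) < T := by exact_mod_cast hT
  have ha₁ : τ / T ≤ 1 := div_le_one_of_le₀ (hτ₁.trans (by exact_mod_cast hT)) hT'.le
  have hterm : ∀ t ∈ range T, |x / (x + (1 - x) * (1 - τ / T) ^ t)
      - x / (x + (1 - x) * exp (-τ * (t / T)))| ≤ T * (τ / T) ^ 2 / x := fun t ht => by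
    rw [show -τ * (t / T) = -(τ / T * t) by ring]
    refine (abs_div_add_mul_one_sub_pow_sub_le hx₀ hx₁ (by positivity) ha₁ t).trans ?_
    gcongr
    exact_mod_cast (mem_range.1 ht).le
  rw [← sum_sub_distrib, Real.norm_eq_abs]
  calc _ ≤ ∑ t ∈ range T, |1 / (T : ℝ) * (x / (x + (1 - x) * (1 - τ / T) ^ t))
        - 1 / (T : ℝ) * (x / (x + (1 - x) * exp (-τ * (t / T))))| := abs_sum_le_sum_abs _ _
    _ ≤ ∑ t ∈ range T, 1 / (T : ℝ) * (T * (τ / T) ^ 2 / x) := by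
        gcongr with t ht
        rw [← mul_sub, abs_mul, abs_of_pos (by positivity)]
        gcongr
        exact hterm t ht
    _ = τ ^ 2 / x / T := by
        rw [sum_const, card_range, nsmul_eq_mul]; field_simp

theorem stmt_16 (x τ : ℝ) (hx : x ∈ Set.Ioc (0:ℝ) 1) (hτ : τ ∈ Set.Ioc (0:ℝ) 1) :
    Filter.Tendsto
      (fun T : ℕ => ∑ t ∈ Finset.range T,
        (1 / (T : ℝ)) * (x / (x + (1 - x) * (1 - τ / T) ^ t)))
      Filter.atTop
      (nhds (∫ ζ in (0:ℝ)..1, x / (x + (1 - x) * Real.exp (-τ * ζ)))) ∧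
    ∫ ζ in (0:ℝ)..1, x / (x + (1 - x) * Real.exp (-τ * ζ)) =
      (1 / τ) * Real.log (1 + x * (Real.exp τ - 1)) := by
  obtain ⟨hx₀, hx₁⟩ := hx
  obtain ⟨hτ₀, hτ₁⟩ := hτ
  refine ⟨?_, integral_div_add_mul_exp_neg_mul hx₀ hx₁ hτ₀.ne'⟩
  have hriemann :=
    ((monotone_div_add_mul_exp_neg_mul hx₀ hx₁ hτ₀.le).monotoneOn _).tendsto_riemannSum
  simpa using hriemann.add (tendsto_sum_one_sub_pow_sub_riemannSum hx₀ hx₁ hτ₀.le hτ₁)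
end

section
/- Let ℓ_τ be the largest integer ℓ ≥ 0 with 1 - e^{-ℓ} ≤ τ, for τ ∈ [0,1). Then the multiset S(τ) = {1-e^{-1}, e^{-1}-e^{-2}, …, e^{-ℓ_τ+1}-e^{-ℓ_τ}, τ-(1-e^{-ℓ_τ})} consists of nonnegative reals summing to τ, and for every subset P of S(τ), ∑_{y∈P} y ≤ 1 - e^{-|P|}. -/
/-!
The first `ℓ` entries are consecutive gaps `e^{-i} - e^{-(i+1)}`, which telescope to
`1 - e^{-ℓ}`; maximality of `ℓ` makes the residual smaller than the next gap. Every entry is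
thus dominated by the gap of the same index, and since the gaps decrease, a sum of `p` of
them is at most the sum of the first `p`, namely `1 - e^{-p}`.
-/

open Finset Real

theorem Finset.sum_le_sum_range_card_of_antitone {M : Type*} [AddCommMonoid M] [PartialOrder M]
    [IsOrderedAddMonoid M] {f : ℕ → M} (hf : Antitone f) (A : Finset ℕ) :
    ∑ a ∈ A, f a ≤ ∑ i ∈ range #A, f i := by
  induction A using Finset.induction_on_max with
  | empty => simp
  | insert b A hb ih =>
    have hbA : b ∉ A := fun h => lt_irrefl b (hb b h)
    have hcard : #A ≤ b := by
      simpa using card_le_card fun a ha => mem_range.mpr (hb a ha)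
    rw [sum_insert hbA, card_insert_of_notMem hbA, sum_range_succ, add_comm]
    exact add_le_add ih (hf hcard)

theorem Finset.sum_fin_le_sum_range_card_of_antitone {M : Type*} [AddCommMonoid M]
    [PartialOrder M] [IsOrderedAddMonoid M] {n : ℕ} {f : ℕ → M} (hf : Antitone f)
    (P : Finset (Fin n)) :
    ∑ k ∈ P, f k ≤ ∑ i ∈ range #P, f i := by
  simpa using sum_le_sum_range_card_of_antitone hf (P.map Fin.valEmbedding)

noncomputable def expGap (i : ℕ) : ℝ := exp (-(i : ℝ)) - exp (-((i : ℝ) + 1))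

theorem expGap_eq (i : ℕ) : expGap i = exp (-(i : ℝ)) * (1 - exp (-1)) := by
  rw [expGap, mul_sub, mul_one, ← exp_add]
  ring_nf

theorem expGap_nonneg (i : ℕ) : 0 ≤ expGap i := by
  rw [expGap_eq]
  have : exp (-1) ≤ 1 := exp_le_one_iff.mpr (by norm_num)
  exact mul_nonneg (exp_nonneg _) (by linarith)

theorem expGap_antitone : Antitone expGap := by
  intro i j hij
  simp only [expGap_eq]
  have : exp (-1) ≤ 1 := exp_le_one_iff.mpr (by norm_num)
  gcongr

theorem sum_range_expGap (n : ℕ) : ∑ i ∈ range n, expGap i = 1 - exp (-(n : ℝ)) := by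
  have := sum_range_sub' (fun i : ℕ => exp (-(i : ℝ))) n
  simp only [Nat.cast_add, Nat.cast_one] at this
  unfold expGap
  rw [this]
  simp

theorem stmt_19_general (τ : ℝ) (ℓ : ℕ)
    (hℓ : 1 - Real.exp (-(ℓ : ℝ)) ≤ τ)
    (hℓmax : ∀ m : ℕ, 1 - Real.exp (-(m : ℝ)) ≤ τ → m ≤ ℓ)
    (s : Fin (ℓ + 1) → ℝ)
    (hs : ∀ k : Fin (ℓ + 1), s k =
      if (k : ℕ) < ℓ then Real.exp (-((k : ℕ) : ℝ)) - Real.exp (-(((k : ℕ) : ℝ) + 1))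
      else τ - (1 - Real.exp (-(ℓ : ℝ)))) :
    (∀ k, 0 ≤ s k) ∧ (∑ k, s k = τ) ∧
    ∀ P : Finset (Fin (ℓ + 1)), ∑ k ∈ P, s k ≤ 1 - Real.exp (-(P.card : ℝ)) := by
  have hresidual : τ - (1 - exp (-(ℓ : ℝ))) ≤ expGap ℓ := by
    have hlt : τ < 1 - exp (-((ℓ + 1 : ℕ) : ℝ)) :=
      lt_of_not_ge fun h => (hℓmax (ℓ + 1) h).not_gt ℓ.lt_succ_self
    push_cast at hlt
    rw [expGap]
    linarith
  have hs_le : ∀ k, s k ≤ expGap k := fun k => by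
    rw [hs k]
    split_ifs with h
    · exact le_rfl
    · rwa [show (k : ℕ) = ℓ by omega]
  refine ⟨fun k => ?_, ?_, fun P => ?_⟩
  · rw [hs k]
    split_ifs
    exacts [expGap_nonneg k, sub_nonneg.mpr hℓ]
  · have hgap : ∀ i : Fin ℓ, s i.castSucc = expGap i := fun i => by
      rw [hs, Fin.val_castSucc, if_pos i.isLt, expGap]
    have hlast : s (Fin.last ℓ) = τ - (1 - exp (-(ℓ : ℝ))) := by
      rw [hs, if_neg (by simp)]
    rw [Fin.sum_univ_castSucc, Fintype.sum_congr _ _ hgap, Fin.sum_univ_eq_sum_range expGap,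
      sum_range_expGap, hlast]
    ring
  · calc ∑ k ∈ P, s k ≤ ∑ k ∈ P, expGap k := sum_le_sum fun k _ => hs_le k
      _ ≤ ∑ i ∈ range #P, expGap i := sum_fin_le_sum_range_card_of_antitone expGap_antitone P
      _ = 1 - exp (-(#P : ℝ)) := sum_range_expGap _

theorem stmt_19 (τ : ℝ) (hτ : τ ∈ Set.Ico (0:ℝ) 1) (ℓ : ℕ)
    (hℓ : 1 - Real.exp (-(ℓ : ℝ)) ≤ τ)
    (hℓmax : ∀ m : ℕ, 1 - Real.exp (-(m : ℝ)) ≤ τ → m ≤ ℓ)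
    (s : Fin (ℓ + 1) → ℝ)
    (hs : ∀ k : Fin (ℓ + 1), s k =
      if (k : ℕ) < ℓ then Real.exp (-((k : ℕ) : ℝ)) - Real.exp (-(((k : ℕ) : ℝ) + 1))
      else τ - (1 - Real.exp (-(ℓ : ℝ)))) :
    (∀ k, 0 ≤ s k) ∧ (∑ k, s k = τ) ∧
    ∀ P : Finset (Fin (ℓ + 1)), ∑ k ∈ P, s k ≤ 1 - Real.exp (-(P.card : ℝ)) :=
  stmt_19_general τ ℓ hℓ hℓmax s hs
end
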